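/- Let 𝕃 be a linear subspace of ℝ^n and D a finite family of nonzero vectors in 𝕃. The following statements are equivalent: (i) D is a positive spanning set of 𝕃; (ii) for every nonzero vector u ∈ 𝕃 there exists an element d ∈ D such that uᵀd > 0; (iii) span(D) = 𝕃 and the zero vector can be written as a linear combination of the elements of D with all coefficients strictly positive. -/

import Mathlib

/-!
(i) ⇒ (ii): if `u = ∑ cᵢ dᵢ` with `cᵢ ≥ 0` and `⟪u, dᵢ⟫ ≤ 0` for all `i`, then `‖u‖² ≤ 0`.
(ii) ⇒ (i): by the conic Carathéodory theorem the positive span is a finite union of images of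
orthants under injective linear maps, hence a closed convex cone. A point of `𝕃` outside it is
separated from it by Farkas' lemma, and the projection of the separating vector onto `𝕃`
violates (ii).
(i) ⇒ (iii): write `-∑ dᵢ` as a nonnegative combination and add `∑ dᵢ`.
(iii) ⇒ (i): adding a large multiple of the strictly positive relation to a linear combination
makes all of its coefficients nonnegative.
-/

open scoped RealInnerProductSpace

noncomputable section

/-- Shorthand for the Euclidean space `ℝ^n`. -/
abbrev Euc (n : ℕ) := EuclideanSpace ℝ (Fin n)

/-- The positive span of a finite family of vectors: the set of all
linear combinations with nonnegative coefficients. -/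
def pspan {n : ℕ} {ι : Type*} [Fintype ι] (D : ι → Euc n) : Set (Euc n) :=
  { x | ∃ c : ι → ℝ, (∀ i, 0 ≤ c i) ∧ x = ∑ i, c i • D i }

/-- `D` is a positive spanning set (PSS) of the subspace `L`. -/
def IsPSS {n : ℕ} {ι : Type*} [Fintype ι] (D : ι → Euc n)
    (L : Submodule ℝ (Euc n)) : Prop :=
  pspan D = (L : Set (Euc n))

/-- `D` is a positive basis of `L`: a PSS of `L` such that removing any single
element (one instance of it) destroys the positive spanning property. -/
def IsPosBasis {n : ℕ} {ι : Type*} [Fintype ι] [DecidableEq ι] (D : ι → Euc n)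
    (L : Submodule ℝ (Euc n)) : Prop :=
  IsPSS D L ∧ ∀ i : ι, ¬ IsPSS (fun j : {j : ι // j ≠ i} => D j) L

/-- `D` is a minimal positive basis of `L`: a positive basis with `dim L + 1` elements. -/
def IsMinPosBasis {n : ℕ} {ι : Type*} [Fintype ι] [DecidableEq ι] (D : ι → Euc n)
    (L : Submodule ℝ (Euc n)) : Prop :=
  IsPosBasis D L ∧ Fintype.card ι = Module.finrank ℝ L + 1

/-- The positive `k`-span of a finite family `D`: the intersection of the positive
spans of all of its subfamilies of cardinality at least `|D| - k + 1`. -/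
def pspanK {n : ℕ} {ι : Type*} [Fintype ι] (k : ℕ) (D : ι → Euc n) : Set (Euc n) :=
  ⋂ (S : Finset ι) (_ : Fintype.card ι - k + 1 ≤ S.card),
    pspan (fun j : {j : ι // j ∈ S} => D (j : ι))

/-- `D` is a positive `k`-spanning set (PkSS) of `L`. -/
def IsPkSS {n : ℕ} {ι : Type*} [Fintype ι] (k : ℕ) (D : ι → Euc n)
    (L : Submodule ℝ (Euc n)) : Prop :=
  pspanK k D = (L : Set (Euc n))

/-- The `k`-span of a finite family `D`: the intersection of the linear spans of
all of its subfamilies of cardinality at least `|D| - k + 1`. -/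
def spanK {n : ℕ} {ι : Type*} [Fintype ι] (k : ℕ) (D : ι → Euc n) : Set (Euc n) :=
  ⋂ (S : Finset ι) (_ : Fintype.card ι - k + 1 ≤ S.card),
    (Submodule.span ℝ (D '' (S : Set ι)) : Set (Euc n))

/-- `D` is a positive `k`-basis of `L`: a PkSS of `L` such that removing any single
element destroys the positive `k`-spanning property. -/
def IsPkBasis {n : ℕ} {ι : Type*} [Fintype ι] [DecidableEq ι] (k : ℕ) (D : ι → Euc n)
    (L : Submodule ℝ (Euc n)) : Prop :=
  IsPkSS k D L ∧ ∀ i : ι, ¬ IsPkSS k (fun j : {j : ι // j ≠ i} => D j) L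

/-- The cosine measure of a finite family of nonzero vectors. -/
def cosm {n : ℕ} {ι : Type*} [Fintype ι] (D : ι → Euc n) : ℝ :=
  ⨅ u : {u : Euc n // ‖u‖ = 1}, ⨆ i : ι, ⟪(u : Euc n), D i⟫ / ‖D i‖

/-- The `k`-cosine measure of a finite family of nonzero vectors. -/
def cosmK {n : ℕ} {ι : Type*} [Fintype ι] (k : ℕ) (D : ι → Euc n) : ℝ :=
  ⨅ u : {u : Euc n // ‖u‖ = 1},
    ⨆ S : {S : Finset ι // S.card = k},
      ⨅ j : {j : ι // j ∈ (S : Finset ι)}, ⟪(u : Euc n), D (j : ι)⟫ / ‖D (j : ι)‖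

/-- The cosine vector set: the unit vectors attaining the cosine measure. -/
def cosVSet {n : ℕ} {ι : Type*} [Fintype ι] (D : ι → Euc n) : Set (Euc n) :=
  { u | ‖u‖ = 1 ∧ (⨆ i : ι, ⟪u, D i⟫ / ‖D i‖) = cosm D }

/-- `D` is orthogonally structured with decomposition given by the pairwise orthogonal
subspaces `L i` (whose sum is `ℝ^n`) and the grouping map `g`: the subfamily of `D`
corresponding to each fiber of `g` is a minimal positive basis of the associated subspace. -/
def IsOSPBDecomp {n s : ℕ} {ι : Type*} [Fintype ι] [DecidableEq ι] (D : ι → Euc n)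
    (L : Fin s → Submodule ℝ (Euc n)) (g : ι → Fin s) : Prop :=
  (∀ i i' : Fin s, i ≠ i' → ∀ x ∈ L i, ∀ y ∈ L i', ⟪x, y⟫ = 0) ∧
  (⨆ i, L i) = (⊤ : Submodule ℝ (Euc n)) ∧
  ∀ i : Fin s, IsMinPosBasis (fun j : {j : ι // g j = i} => D (j : ι)) (L i)

/-- The Gram matrix `G(B) = BᵀB` of the subfamily of `D` indexed by `S`. -/
def gramSub {n : ℕ} {ι : Type*} [Fintype ι] (D : ι → Euc n) (S : Finset ι) :
    Matrix {j : ι // j ∈ S} {j : ι // j ∈ S} ℝ :=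
  Matrix.of fun j j' => ⟪D (j : ι), D (j' : ι)⟫

/-- The quantity `γ_B = 1/√(1ᵀ G(B)⁻¹ 1)` associated with the subfamily of `D`
indexed by `S`. -/
def gammaSub {n : ℕ} {ι : Type*} [Fintype ι] [DecidableEq ι] (D : ι → Euc n)
    (S : Finset ι) : ℝ :=
  1 / Real.sqrt (∑ j : {j : ι // j ∈ S}, ∑ j' : {j : ι // j ∈ S}, (gramSub D S)⁻¹ j j')

/-- The subfamily of `D` indexed by `S` is a linear basis of `L`. -/
def IsBasisSub {n : ℕ} {ι : Type*} [Fintype ι] (D : ι → Euc n) (S : Finset ι)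
    (L : Submodule ℝ (Euc n)) : Prop :=
  LinearIndependent ℝ (fun j : {j : ι // j ∈ S} => D (j : ι)) ∧
  Submodule.span ℝ (D '' (S : Set ι)) = L

/-- `R` is a rotation matrix: `RᵀR = I` and `det R = 1`. -/
def IsRotation {n : ℕ} (R : Matrix (Fin n) (Fin n) ℝ) : Prop :=
  R.transpose * R = 1 ∧ R.det = 1

/-- Action of an `n × n` matrix on the Euclidean space `ℝ^n`. -/
def rotAct {n : ℕ} (R : Matrix (Fin n) (Fin n) ℝ) (x : Euc n) : Euc n :=
  Matrix.toEuclideanLin R x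

/-- The quantity `ρ_D` of Lemma 4.13, where `P i i'` denotes the orthogonal projection
of `d_i` onto `L ∩ {v_{i'}}^⊥`. -/
def rhoQ {n : ℕ} {ι : Type*} [Fintype ι] (D : ι → Euc n) (P : ι → ι → Euc n) : ℝ :=
  ⨆ p : ι × ι, ⟪D p.1, P p.1 p.2⟫ / (‖D p.1‖ * ‖P p.1 p.2‖)

section Caratheodory

variable {ι E : Type*} [Fintype ι] [AddCommGroup E] [Module ℝ E]

lemma exists_dependence_of_not_linearIndepOn {D : ι → E} {s : Set ι}
    (h : ¬ LinearIndepOn ℝ D s) :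
    ∃ g : ι → ℝ, Function.support g ⊆ s ∧ ∑ i, g i • D i = 0 ∧ ∃ j, 0 < g j := by
  classical
  obtain ⟨t, g, hts, hgt, hsum, j, -, hgj⟩ : ∃ (t : Finset ι) (g : ι → ℝ), ↑t ⊆ s ∧
      (∀ i ∉ t, g i = 0) ∧ ∑ i ∈ t, g i • D i = 0 ∧ ∃ j ∈ t, g j ≠ 0 := by
    simpa [linearIndepOn_iff''] using h
  have hsupp : Function.support g ⊆ s := fun i hi => hts (by_contra fun hit => hi (hgt i hit))
  rw [Finset.sum_subset (Finset.subset_univ t) fun i _ hi => by rw [hgt i hi, zero_smul]] at hsum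
  rcases hgj.lt_or_gt with hneg | hpos
  · exact ⟨-g, by rwa [Function.support_neg], by simp [hsum], j, by simpa using hneg⟩
  · exact ⟨g, hsupp, hsum, j, hpos⟩

theorem exists_nonneg_linearIndepOn_support_sum_eq (D : ι → E) {c : ι → ℝ} (hc : 0 ≤ c) :
    ∃ c' : ι → ℝ, 0 ≤ c' ∧ LinearIndepOn ℝ D (Function.support c') ∧
      ∑ i, c' i • D i = ∑ i, c i • D i := by
  classical
  induction hN : (Finset.univ.filter fun i => c i ≠ 0).card using Nat.strong_induction_on
    generalizing c with
  | _ N ih =>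
  by_cases hli : LinearIndepOn ℝ D (Function.support c)
  · exact ⟨c, hc, hli, rfl⟩
  obtain ⟨g, hgc, hg, j, hgj⟩ := exists_dependence_of_not_linearIndepOn hli
  -- `t` is the largest step along `-g` that keeps `c - t • g` nonnegative; it kills `c i₀`.
  obtain ⟨i₀, hi₀, hmin⟩ := Finset.exists_min_image (Finset.univ.filter fun i => 0 < g i)
    (fun i => c i / g i) ⟨j, by simpa using hgj⟩
  simp only [Finset.mem_filter, Finset.mem_univ, true_and] at hi₀ hmin
  set t := c i₀ / g i₀
  have hc' : 0 ≤ c - t • g := fun i => by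
    rcases le_or_gt (g i) 0 with hgi | hgi
    · have ht : 0 ≤ t := div_nonneg (hc i₀) hi₀.le
      have hci : 0 ≤ c i := hc i
      simp only [Pi.sub_apply, Pi.smul_apply, smul_eq_mul, Pi.zero_apply, sub_nonneg]
      linarith [mul_nonpos_of_nonneg_of_nonpos ht hgi]
    · simpa [sub_nonneg, ← le_div_iff₀ hgi] using hmin i hgi
  have hlt : (Finset.univ.filter fun i => (c - t • g) i ≠ 0).card < N := by
    rw [← hN]
    refine Finset.card_lt_card (Finset.ssubset_iff_of_subset ?_ |>.mpr ⟨i₀, ?_, ?_⟩)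
    · intro i
      simp only [Finset.mem_filter, Finset.mem_univ, true_and]
      intro hi hci
      have hgi : g i = 0 := by_contra fun h => hgc h hci
      exact hi (by simp [hci, hgi])
    · simpa using hgc hi₀.ne'
    · simp [t, hi₀.ne']
  obtain ⟨c', hc'0, hli', hsum⟩ := ih _ hlt hc' rfl
  refine ⟨c', hc'0, hli', ?_⟩
  simp [hsum, sub_smul, Finset.sum_sub_distrib, mul_smul, ← Finset.smul_sum, hg]

end Caratheodory

section PositiveSpan

variable {n : ℕ} {ι : Type*} [Fintype ι]

lemma pspan_eq_image_linearCombination (D : ι → Euc n) :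
    pspan D = Fintype.linearCombination ℝ D '' Set.Ici 0 := by
  ext x
  simp [pspan, Pi.le_def, Fintype.linearCombination_apply, eq_comm]

lemma mem_pspan_self (D : ι → Euc n) (i : ι) : D i ∈ pspan D := by
  classical
  exact ⟨Pi.single i 1, fun j => by by_cases h : j = i <;> simp [h], by simp [Pi.single_apply]⟩

lemma pspan_subset_span (D : ι → Euc n) : pspan D ⊆ Submodule.span ℝ (Set.range D) := by
  rintro x ⟨c, -, rfl⟩
  exact Submodule.sum_mem _ fun i _ => Submodule.smul_mem _ _ (Submodule.subset_span ⟨i, rfl⟩)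

lemma pspan_comp_subset {κ : Type*} [Fintype κ] (D : ι → Euc n) (f : κ → ι) :
    pspan (D ∘ f) ⊆ pspan D := by
  classical
  rintro x ⟨c, hc, rfl⟩
  refine ⟨fun i => ∑ k with f k = i, c k, fun i => Finset.sum_nonneg fun k _ => hc k, ?_⟩
  rw [← Finset.sum_fiberwise Finset.univ f]
  simp only [Finset.sum_smul, Function.comp_apply]
  refine Finset.sum_congr rfl fun i _ => Finset.sum_congr rfl fun k hk => ?_
  rw [(Finset.mem_filter.mp hk).2]

lemma isClosed_pspan_of_linearIndependent {D : ι → Euc n} (h : LinearIndependent ℝ D) :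
    IsClosed (pspan D) := by
  rw [pspan_eq_image_linearCombination]
  have hker : LinearMap.ker (Fintype.linearCombination ℝ D) = ⊥ :=
    LinearMap.ker_eq_bot.mpr h.fintypeLinearCombination_injective
  exact (LinearMap.isClosedEmbedding_of_injective hker).isClosedMap _ isClosed_Ici

lemma isClosed_pspan (D : ι → Euc n) : IsClosed (pspan D) := by
  classical
  have hcover : pspan D = ⋃ s : {s : Set ι // LinearIndepOn ℝ D s},
      pspan (D ∘ ((↑) : s.1 → ι)) := by
    refine (Set.iUnion_subset fun s => pspan_comp_subset D _).antisymm' ?_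
    rintro x ⟨c, hc, rfl⟩
    obtain ⟨c', hc', hli, hsum⟩ := exists_nonneg_linearIndepOn_support_sum_eq D hc
    refine Set.mem_iUnion.mpr ⟨⟨_, hli⟩, fun i => c' i, fun i => hc' i, ?_⟩
    rw [← hsum]
    exact Finset.sum_congr_set _ _ _ (fun _ _ => rfl) fun i hi => by
      rw [Function.notMem_support.mp hi, zero_smul]
  rw [hcover]
  exact isClosed_iUnion_of_finite fun s => isClosed_pspan_of_linearIndependent s.2

def pspanProperCone (D : ι → Euc n) : ProperCone ℝ (Euc n) where
  toSubmodule := (PointedCone.positive ℝ (ι → ℝ)).map (Fintype.linearCombination ℝ D)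
  isClosed' := by simpa [pspan_eq_image_linearCombination] using isClosed_pspan D

lemma coe_pspanProperCone (D : ι → Euc n) : (pspanProperCone D : Set (Euc n)) = pspan D := by
  rw [pspan_eq_image_linearCombination]
  rfl

lemma exists_inner_pos_of_mem_pspan {D : ι → Euc n} {u : Euc n} (hu : u ∈ pspan D)
    (hu0 : u ≠ 0) : ∃ i, 0 < ⟪u, D i⟫ := by
  obtain ⟨c, hc, hsum⟩ := hu
  by_contra! h
  have : ⟪u, u⟫ ≤ 0 := calc
    ⟪u, u⟫ = ∑ i, c i * ⟪u, D i⟫ := by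
      nth_rewrite 2 [hsum]
      simp only [inner_sum, real_inner_smul_right]
    _ ≤ 0 := Finset.sum_nonpos fun i _ => mul_nonpos_of_nonneg_of_nonpos (hc i) (h i)
  exact hu0 (real_inner_self_nonpos.mp this)

lemma exists_inner_nonpos_of_notMem_pspan {L : Submodule ℝ (Euc n)} {D : ι → Euc n}
    (hmem : ∀ i, D i ∈ L) {u : Euc n} (huL : u ∈ L) (hu : u ∉ pspan D) :
    ∃ w ∈ L, w ≠ 0 ∧ ∀ i, ⟪w, D i⟫ ≤ 0 := by
  rw [← coe_pspanProperCone] at hu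
  obtain ⟨y, hyD, hyu⟩ := (pspanProperCone D).hyperplane_separation' hu
  have hproj : ∀ v ∈ L, ⟪L.starProjection y, v⟫ = ⟪v, y⟫ := fun v hv => by
    rw [L.inner_starProjection_left_eq_right, L.starProjection_eq_self_iff.mpr hv,
      real_inner_comm]
  refine ⟨-L.starProjection y, L.neg_mem (L.starProjection_apply_mem y), ?_, fun i => ?_⟩
  · intro h0
    have := hproj u huL
    rw [neg_eq_zero.mp h0, inner_zero_left] at this
    linarith
  · have := hyD (D i) (by rw [← SetLike.mem_coe, coe_pspanProperCone]; exact mem_pspan_self D i)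
    rw [inner_neg_left, hproj _ (hmem i)]
    linarith

lemma exists_pos_sum_smul_eq_zero_of_neg_sum_mem_pspan {D : ι → Euc n}
    (h : -∑ i, D i ∈ pspan D) : ∃ c : ι → ℝ, (∀ i, 0 < c i) ∧ ∑ i, c i • D i = 0 := by
  obtain ⟨c, hc, hsum⟩ := h
  refine ⟨fun i => c i + 1, fun i => by linarith [hc i], ?_⟩
  simp [add_smul, Finset.sum_add_distrib, ← hsum]

lemma pspan_eq_span_of_pos_sum_smul_eq_zero {D : ι → Euc n} {c : ι → ℝ} (hc : ∀ i, 0 < c i)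
    (hsum : ∑ i, c i • D i = 0) : pspan D = Submodule.span ℝ (Set.range D) := by
  refine (pspan_subset_span D).antisymm fun u hu => ?_
  obtain ⟨a, rfl⟩ := (Submodule.mem_span_range_iff_exists_fun ℝ).mp hu
  set t := ∑ i, |a i| / c i
  have hle : ∀ i, |a i| ≤ t * c i := fun i => by
    rw [← div_le_iff₀ (hc i)]
    exact Finset.single_le_sum (fun j _ => div_nonneg (abs_nonneg _) (hc j).le)
      (Finset.mem_univ i)
  refine ⟨fun i => a i + t * c i, fun i => by linarith [neg_abs_le (a i), hle i], ?_⟩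
  simp [add_smul, Finset.sum_add_distrib, mul_smul, ← Finset.smul_sum, hsum]

end PositiveSpan

theorem pss_characterizations_general {n : ℕ} {ι : Type*} [Fintype ι]
    (L : Submodule ℝ (Euc n)) (D : ι → Euc n)
    (hmem : ∀ i, D i ∈ L) :
    (IsPSS D L ↔ ∀ u ∈ L, u ≠ 0 → ∃ i : ι, 0 < ⟪u, D i⟫) ∧
    (IsPSS D L ↔
      Submodule.span ℝ (Set.range D) = L ∧
      ∃ c : ι → ℝ, (∀ i, 0 < c i) ∧ ∑ i, c i • D i = 0) := by
  have hspan_le : Submodule.span ℝ (Set.range D) ≤ L :=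
    Submodule.span_le.mpr (Set.range_subset_iff.mpr hmem)
  have hsub : pspan D ⊆ L := (pspan_subset_span D).trans hspan_le
  refine ⟨⟨fun h u hu hu0 => exists_inner_pos_of_mem_pspan (h ▸ hu) hu0, fun h => ?_⟩,
    ⟨fun h => ⟨?_, exists_pos_sum_smul_eq_zero_of_neg_sum_mem_pspan ?_⟩, ?_⟩⟩
  · refine hsub.antisymm fun u hu => by_contra fun hnot => ?_
    obtain ⟨w, hwL, hw0, hwD⟩ := exists_inner_nonpos_of_notMem_pspan hmem hu hnot
    obtain ⟨i, hi⟩ := h w hwL hw0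
    exact (hwD i).not_gt hi
  · exact hspan_le.antisymm (SetLike.coe_subset_coe.mp (h ▸ pspan_subset_span D))
  · exact h ▸ L.neg_mem (L.sum_mem fun i _ => hmem i)
  · rintro ⟨hspan, c, hc, hsum⟩
    rw [IsPSS, pspan_eq_span_of_pos_sum_smul_eq_zero hc hsum, hspan]

/-- Lemma 2.2: characterizations of positive spanning sets:
(i) `D` is a PSS of `L`; (ii) every nonzero `u ∈ L` makes a positive dot product with
some element of `D`; (iii) `span(D) = L` and zero is a strictly positive combination
of the elements of `D`. -/
theorem pss_characterizations {n : ℕ} {ι : Type*} [Fintype ι]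
    (L : Submodule ℝ (Euc n)) (D : ι → Euc n)
    (hmem : ∀ i, D i ∈ L) (h0 : ∀ i, D i ≠ 0) :
    (IsPSS D L ↔ ∀ u ∈ L, u ≠ 0 → ∃ i : ι, 0 < ⟪u, D i⟫) ∧
    (IsPSS D L ↔
      Submodule.span ℝ (Set.range D) = L ∧
      ∃ c : ι → ℝ, (∀ i, 0 < c i) ∧ ∑ i, c i • D i = 0) :=
  pss_characterizations_general L D hmem
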